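/- arXiv:2106.10387 — 2 statements merged into one kernel-verified Lean document; each statement's English description precedes it below -/
import Mathlib

section
/- Fix an integer n ≥ 1 and for each h > 0 let K_h be a random variable with the beta-binomial distribution BB(n, cπ(h), c(1−π(h))). Then for every k ∈ {1,…,n}, P(K_h = k) = c·C(n,k)·[Γ(k)·Γ(n−k+c)/Γ(n+c)]·r(t)·h + o(h) as h → 0+. -/
open scoped BigOperators
open Filter Topology Asymptotics

/-- The Beta function `B(a,b) = Γ(a)Γ(b)/Γ(a+b)`. -/
noncomputable def betaFn (a b : ℝ) : ℝ := Real.Gamma a * Real.Gamma b / Real.Gamma (a + b)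

/-- The pmf of the beta-binomial distribution `BB(n, α, β)`:
`P(K = k) = C(n,k) · B(k+α, n−k+β) / B(α,β)`. -/
noncomputable def bbPmf (n : ℕ) (α β : ℝ) (k : ℕ) : ℝ :=
  (n.choose k : ℝ) * betaFn ((k : ℝ) + α) ((n : ℝ) - (k : ℝ) + β) / betaFn α β

/-- `π(h) = 1 − exp(−∫_t^{t+h} r(s) ds)`. -/
noncomputable def pih (r : ℝ → ℝ) (t h : ℝ) : ℝ :=
  1 - Real.exp (-(∫ s in t..(t + h), r s))

/-!
Writing `α = c p`, `β = c (1 - p)` and using `Γ(α) = Γ(α + 1) / α`, the pmf `P(K = k)` equals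
`p · g(p)` with `g` continuous at `p = 0` and `g(0) = c · C(n,k) · B(k, n - k + c)`, so as a
function of `p` it has derivative `g(0)` at `0`. Since `π(0) = 0` and `π'(0) = r(t)`, the chain
rule gives the first-order expansion in `h`.
-/

lemma Real.continuousAt_Gamma_of_pos {s : ℝ} (hs : 0 < s) : ContinuousAt Real.Gamma s :=
  (Real.differentiableAt_Gamma fun m hm => by
    linarith [hm ▸ hs, (m.cast_nonneg : (0 : ℝ) ≤ m)]).continuousAt

-- Also true at `s = 0`, where `Γ 0 = 0` and `x / 0 = 0`.
lemma Real.Gamma_eq_Gamma_add_one_div (s : ℝ) : Real.Gamma s = Real.Gamma (s + 1) / s := by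
  rcases eq_or_ne s 0 with rfl | hs
  · simp
  · rw [Real.Gamma_add_one hs, mul_div_cancel_left₀ _ hs]

lemma continuousAt_betaFn {a b : ℝ} (ha : 0 < a) (hb : 0 < b) :
    ContinuousAt (fun x : ℝ × ℝ => betaFn x.1 x.2) (a, b) := by
  unfold betaFn
  have hΓ : ∀ {s : ℝ}, 0 < s → ContinuousAt Real.Gamma s := Real.continuousAt_Gamma_of_pos
  refine ContinuousAt.div ?_ ?_ (Real.Gamma_pos_of_pos (add_pos ha hb)).ne'
  · exact ((hΓ ha).comp (x := (a, b)) continuousAt_fst).mul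
      ((hΓ hb).comp (x := (a, b)) continuousAt_snd)
  · exact (hΓ (add_pos ha hb)).comp (x := (a, b)) (f := fun x : ℝ × ℝ => x.1 + x.2)
      (continuous_fst.add continuous_snd).continuousAt

lemma bbPmf_eq_mul (n : ℕ) (α β : ℝ) (k : ℕ) :
    bbPmf n α β k = α * ((n.choose k : ℝ) * betaFn (k + α) (n - k + β) * Real.Gamma (α + β)
      / (Real.Gamma (α + 1) * Real.Gamma β)) := by
  have hB : betaFn α β = Real.Gamma (α + 1) / α * Real.Gamma β / Real.Gamma (α + β) := by
    rw [betaFn, ← Real.Gamma_eq_Gamma_add_one_div]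
  rw [bbPmf, hB]
  simp only [div_eq_mul_inv, mul_inv, inv_inv]
  ring

lemma hasDerivAt_sub_mul_of_continuousAt {g : ℝ → ℝ} {a : ℝ} (hg : ContinuousAt g a) :
    HasDerivAt (fun x => (x - a) * g x) (g a) a := by
  rw [hasDerivAt_iff_tendsto_slope]
  refine (hg.tendsto.mono_left nhdsWithin_le_nhds).congr' ?_
  filter_upwards [self_mem_nhdsWithin] with x hx
  rw [slope_def_field, sub_self, zero_mul, sub_zero, mul_div_cancel_left₀ _ (sub_ne_zero.2 hx)]

lemma pih_zero (r : ℝ → ℝ) (t : ℝ) : pih r t 0 = 0 := by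
  simp [pih]

lemma hasDerivAt_pih {r : ℝ → ℝ} (hr : Continuous r) (t h : ℝ) :
    HasDerivAt (pih r t) (r (t + h) * Real.exp (-∫ s in t..t + h, r s)) h := by
  have hint : HasDerivAt (fun h => ∫ s in t..t + h, r s) (r (t + h)) h := by
    simpa using (hr.integral_hasStrictDerivAt t (t + h)).hasDerivAt.comp_const_add t h
  change HasDerivAt (fun h => 1 - Real.exp (-∫ s in t..t + h, r s)) _ h
  simpa [mul_comm] using hint.neg.exp.const_sub 1

lemma hasDerivAt_bbPmf_zero {c : ℝ} (hc : 0 < c) {n k : ℕ} (hk : 1 ≤ k) (hkn : k ≤ n) :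
    HasDerivAt (fun p => bbPmf n (c * p) (c * (1 - p)) k)
      (c * n.choose k * betaFn k (n - k + c)) 0 := by
  set g : ℝ → ℝ := fun p => c * ((n.choose k : ℝ) * betaFn (k + c * p) (n - k + c * (1 - p))
    * Real.Gamma c / (Real.Gamma (c * p + 1) * Real.Gamma (c * (1 - p))))
  have hfg : (fun p => bbPmf n (c * p) (c * (1 - p)) k) = fun p => (p - 0) * g p := by
    funext p
    rw [bbPmf_eq_mul, show c * p + c * (1 - p) = c by ring]
    ring
  have hk₀ : (0 : ℝ) < k := by exact_mod_cast hk
  have hnk : (0 : ℝ) < n - k + c := by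
    have : (k : ℝ) ≤ n := by exact_mod_cast hkn
    linarith
  have hg : ContinuousAt g 0 := by
    have hB : ContinuousAt (fun p : ℝ => betaFn (k + c * p) (n - k + c * (1 - p))) 0 :=
      (continuousAt_betaFn hk₀ hnk).comp_of_eq
        (f := fun p : ℝ => (k + c * p, n - k + c * (1 - p))) (by fun_prop) (by simp)
    have hΓ₁ : ContinuousAt (fun p : ℝ => Real.Gamma (c * p + 1)) 0 :=
      (Real.continuousAt_Gamma_of_pos one_pos).comp_of_eq (by fun_prop) (by simp)
    have hΓ₂ : ContinuousAt (fun p : ℝ => Real.Gamma (c * (1 - p))) 0 :=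
      (Real.continuousAt_Gamma_of_pos hc).comp_of_eq (by fun_prop) (by simp)
    refine continuousAt_const.mul (((continuousAt_const.mul hB).mul continuousAt_const).div
      (hΓ₁.mul hΓ₂) ?_)
    simp [(Real.Gamma_pos_of_pos hc).ne']
  have hg0 : g 0 = c * n.choose k * betaFn k (n - k + c) := by
    simp only [g, mul_zero, add_zero, sub_zero, mul_one, zero_add, Real.Gamma_one, one_mul,
      mul_div_cancel_right₀ _ (Real.Gamma_pos_of_pos hc).ne']
    ring
  rw [hfg, ← hg0]
  exact hasDerivAt_sub_mul_of_continuousAt hg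

theorem bbPmf_transition_rate_general
    (r : ℝ → ℝ) (hr_cont : Continuous r)
    (t c : ℝ) (hc : 0 < c) (n : ℕ)
    (k : ℕ) (hk1 : 1 ≤ k) (hkn : k ≤ n) :
    (fun h : ℝ =>
        bbPmf n (c * pih r t h) (c * (1 - pih r t h)) k
          - c * (n.choose k : ℝ) *
              (Real.Gamma (k : ℝ) * Real.Gamma ((n : ℝ) - (k : ℝ) + c)
                / Real.Gamma ((n : ℝ) + c)) * r t * h)
      =o[𝓝[>] (0 : ℝ)] (fun h => h) := by
  have hπ : HasDerivAt (pih r t) (r t) 0 := by simpa using hasDerivAt_pih hr_cont t 0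
  have hpmf := hasDerivAt_bbPmf_zero hc hk1 hkn
  rw [← pih_zero r t] at hpmf
  have hB : betaFn k (n - k + c) = Real.Gamma k * Real.Gamma (n - k + c) / Real.Gamma (n + c) := by
    rw [betaFn, show (k : ℝ) + (n - k + c) = n + c by ring]
  refine ((hpmf.comp 0 hπ).isLittleO.mono nhdsWithin_le_nhds).congr (fun h => ?_) sub_zero
  simp only [bbPmf_eq_mul, Function.comp_apply, pih_zero, mul_zero, add_zero, sub_zero, mul_one,
    hB, zero_add, Real.Gamma_one, one_mul, zero_mul, smul_eq_mul, sub_right_inj]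
  ring

/-- for `K_h ~ BB(n, cπ(h), c(1−π(h)))` and every `k ∈ {1,…,n}`,
`P(K_h = k) = c·C(n,k)·[Γ(k)Γ(n−k+c)/Γ(n+c)]·r(t)·h + o(h)` as `h → 0+`. -/
theorem bbPmf_transition_rate
    (r : ℝ → ℝ) (hr_cont : Continuous r) (hr_pos : ∀ s, 0 < r s)
    (t c : ℝ) (hc : 0 < c) (n : ℕ) (hn : 1 ≤ n)
    (k : ℕ) (hk1 : 1 ≤ k) (hkn : k ≤ n) :
    (fun h : ℝ =>
        bbPmf n (c * pih r t h) (c * (1 - pih r t h)) k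
          - c * (n.choose k : ℝ) *
              (Real.Gamma (k : ℝ) * Real.Gamma ((n : ℝ) - (k : ℝ) + c)
                / Real.Gamma ((n : ℝ) + c)) * r t * h)
      =o[𝓝[>] (0 : ℝ)] (fun h => h) :=
  bbPmf_transition_rate_general r hr_cont t c hc n k hk1 hkn
end

section
/- Fix an integer x ≥ 1, and for each h > 0 let (Δ_0^h,…,Δ_m^h) be a random vector with the Dirichlet-multinomial distribution DM(x; cπ_0(h), cπ_1(h),…,cπ_m(h)). Then for all i ≠ j in {1,…,m}, lim_{h→0+} h⁻¹·Cov(Δ_i^h, Δ_j^h) = 0. -/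
/-!
Since `Γ(k + a) = a (a + 1) ⋯ (a + k - 1) · Γ(a)`, the `DM(x; α)`-expectation of any `f` that
vanishes where `kₚ = 0` is `αₚ` times a polynomial in `α`, divided by the rising factorial of
`∑ α = c`. Hence `h⁻¹ Cov(Δᵢ, Δⱼ) = (h⁻¹ αᵢ(h)) · Φ(α(h))` with `Φ` continuous. The first
factor tends to `c rᵢ(t)`, and `Φ` vanishes at `α(0⁺) = (c, 0, …, 0)`, because `αⱼ = 0` kills
both `E[Δᵢ Δⱼ] / αᵢ` and `E[Δⱼ]`.
-/

open scoped BigOperators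
open Filter Topology Asymptotics

/-- The pmf of the Dirichlet-multinomial distribution `DM(x; α_0,…,α_m)` on vectors
`k : Fin (m+1) → ℕ` with `∑ k = x`:
`P(k) = [x!/∏ k_i!] · [Γ(∑α)/∏Γ(α_i)] · [∏Γ(k_i+α_i)] / Γ(x+∑α)`. -/
noncomputable def dmPmf (m x : ℕ) (α : Fin (m + 1) → ℝ) (k : Fin (m + 1) → ℕ) : ℝ :=
  ((x.factorial : ℝ) / ∏ i, ((k i).factorial : ℝ)) *
    (Real.Gamma (∑ i, α i) / ∏ i, Real.Gamma (α i)) *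
    (∏ i, Real.Gamma ((k i : ℝ) + α i)) / Real.Gamma ((x : ℝ) + ∑ i, α i)

/-- Expectation of `f(Δ_0,…,Δ_m)` under `DM(x; α)`: the sum of `f(k) · P(k)` over all
nonnegative integer vectors `k` with `∑ k = x`. -/
noncomputable def dmExp (m x : ℕ) (α : Fin (m + 1) → ℝ) (f : (Fin (m + 1) → ℕ) → ℝ) : ℝ :=
  ∑ k ∈ (Fintype.piFinset fun _ : Fin (m + 1) => Finset.range (x + 1)).filter
      (fun k => ∑ j, k j = x), f k * dmPmf m x α k

/-- `π_i(h) = (1 − exp(−∑_j ∫_t^{t+h} r_j(s) ds)) · r_i(t)/∑_j r_j(t)`, for `i = 1,…,m`. -/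
noncomputable def pmain (m : ℕ) (r : Fin m → ℝ → ℝ) (t h : ℝ) (i : Fin m) : ℝ :=
  (1 - Real.exp (-(∑ j, ∫ s in t..(t + h), r j s))) * r i t / ∑ j, r j t

/-- The Dirichlet parameter vector `(cπ_0(h), cπ_1(h),…,cπ_m(h))`, where
`π_0(h) = 1 − ∑_{i=1}^m π_i(h)`; the index `0 : Fin (m+1)` carries `cπ_0(h)`. -/
noncomputable def alphaVec (m : ℕ) (r : Fin m → ℝ → ℝ) (t c h : ℝ) : Fin (m + 1) → ℝ :=
  Fin.cons (c * (1 - ∑ i, pmain m r t h i)) (fun i => c * pmain m r t h i)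

theorem Real.Gamma_nat_add_eq_ascPochhammer_mul {a : ℝ} (ha : ∀ k : ℕ, a ≠ -k) (n : ℕ) :
    Real.Gamma (n + a) = (ascPochhammer ℝ n).eval a * Real.Gamma a := by
  induction n with
  | zero => simp
  | succ n ih =>
    have hne : (n : ℝ) + a ≠ 0 := fun h => ha n (by linarith)
    rw [Nat.cast_succ, add_right_comm, Real.Gamma_add_one hne, ih, ascPochhammer_succ_eval]
    ring

section RisingWeight

variable {ι : Type*} [Fintype ι]

noncomputable def risingWeight (k : ι → ℕ) (α : ι → ℝ) : ℝ :=
  ∏ i, (ascPochhammer ℝ (k i)).eval (α i)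

theorem continuous_risingWeight (k : ι → ℕ) : Continuous (risingWeight k) :=
  continuous_finsetProd _ fun i _ => (Polynomial.continuous _).comp (continuous_apply i)

theorem risingWeight_eq_zero {k : ι → ℕ} {α : ι → ℝ} {q : ι} (hk : k q ≠ 0) (hα : α q = 0) :
    risingWeight k α = 0 :=
  Finset.prod_eq_zero (Finset.mem_univ q) (by rw [hα, ascPochhammer_ne_zero_eval_zero ℝ hk])

theorem risingWeight_eq_mul [DecidableEq ι] {k : ι → ℕ} {p : ι} (hk : k p ≠ 0) (α : ι → ℝ) :
    risingWeight k α = α p * risingWeight (k - Pi.single p 1) (α + Pi.single p 1) := by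
  obtain ⟨n, hn⟩ := Nat.exists_eq_succ_of_ne_zero hk
  have hrest : ∀ i ∈ Finset.univ.erase p, (ascPochhammer ℝ (k i)).eval (α i) =
      (ascPochhammer ℝ ((k - Pi.single p 1 : ι → ℕ) i)).eval ((α + Pi.single p 1 : ι → ℝ) i) := by
    intro i hi
    simp [Pi.single_eq_of_ne (Finset.ne_of_mem_erase hi)]
  simp only [risingWeight]
  rw [← Finset.mul_prod_erase _ _ (Finset.mem_univ p),
    ← Finset.mul_prod_erase _ _ (Finset.mem_univ p), Finset.prod_congr rfl hrest]
  simp [hn, ascPochhammer_succ_left, mul_assoc]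

end RisingWeight

theorem dmPmf_eq_risingWeight {m x : ℕ} {α : Fin (m + 1) → ℝ} (hα : ∀ i, 0 < α i)
    (k : Fin (m + 1) → ℕ) :
    dmPmf m x α k = (x.factorial : ℝ) / (∏ i, ((k i).factorial : ℝ)) * risingWeight k α /
      (ascPochhammer ℝ x).eval (∑ i, α i) := by
  have hpos {a : ℝ} (ha : 0 < a) (l : ℕ) : a ≠ -l := by
    linarith [(Nat.cast_nonneg l : (0 : ℝ) ≤ l)]
  have hsum : 0 < ∑ i, α i := Finset.sum_pos (fun i _ => hα i) Finset.univ_nonempty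
  have hΓ : ∏ i, Real.Gamma (α i) ≠ 0 :=
    Finset.prod_ne_zero_iff.2 fun i _ => (Real.Gamma_pos_of_pos (hα i)).ne'
  have hΓsum := (Real.Gamma_pos_of_pos hsum).ne'
  have hP := (ascPochhammer_pos x _ hsum).ne'
  simp only [dmPmf, risingWeight, Real.Gamma_nat_add_eq_ascPochhammer_mul (hpos hsum),
    Real.Gamma_nat_add_eq_ascPochhammer_mul (hpos (hα _)), Finset.prod_mul_distrib]
  field_simp

/-- Only meaningful for `f` vanishing where `kₚ = 0`: the other terms carry a junk weight coming
from the truncated subtraction `k - Pi.single p 1`. -/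
noncomputable def dmCofactor (m x : ℕ) (f : (Fin (m + 1) → ℕ) → ℝ) (p : Fin (m + 1))
    (α : Fin (m + 1) → ℝ) : ℝ :=
  ∑ k ∈ (Fintype.piFinset fun _ : Fin (m + 1) => Finset.range (x + 1)).filter
      (fun k => ∑ j, k j = x),
    f k * ((x.factorial : ℝ) / ∏ i, ((k i).factorial : ℝ)) *
      risingWeight (k - Pi.single p 1) (α + Pi.single p 1)

section DirichletMultinomial

variable {m x : ℕ} {f : (Fin (m + 1) → ℕ) → ℝ} {p q : Fin (m + 1)}

theorem dmExp_eq_mul_dmCofactor {α : Fin (m + 1) → ℝ} (hα : ∀ i, 0 < α i)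
    (hf : ∀ k, k p = 0 → f k = 0) :
    dmExp m x α f = α p * dmCofactor m x f p α / (ascPochhammer ℝ x).eval (∑ i, α i) := by
  simp only [dmExp, dmCofactor, dmPmf_eq_risingWeight hα, Finset.mul_sum, Finset.sum_div]
  refine Finset.sum_congr rfl fun k _ => ?_
  by_cases hk : k p = 0
  · simp [hf k hk]
  · rw [risingWeight_eq_mul hk]
    ring

theorem continuous_dmCofactor : Continuous (dmCofactor m x f p) :=
  continuous_finsetSum _ fun _ _ => continuous_const.mul
    ((continuous_risingWeight _).comp (continuous_id.add continuous_const))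

theorem dmCofactor_eq_zero (hpq : p ≠ q) (hf : ∀ k, k q = 0 → f k = 0)
    {α : Fin (m + 1) → ℝ} (hα : α q = 0) : dmCofactor m x f p α = 0 := by
  refine Finset.sum_eq_zero fun k _ => ?_
  by_cases hk : k q = 0
  · simp [hf k hk]
  · rw [risingWeight_eq_zero (q := q) (by simpa [Pi.single_eq_of_ne' hpq] using hk)
      (by simpa [Pi.single_eq_of_ne' hpq] using hα), mul_zero]

theorem tendsto_mul_dmCov {β : Type*} {l : Filter β} {α : β → Fin (m + 1) → ℝ}
    {a : Fin (m + 1) → ℝ} {s : β → ℝ} {L : ℝ} (hpq : p ≠ q)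
    (hα_pos : ∀ᶠ b in l, ∀ i, 0 < α b i) (hα : Tendsto α l (𝓝 a)) (ha : 0 < ∑ i, a i)
    (haq : a q = 0) (hs : Tendsto (fun b => s b * α b p) l (𝓝 L)) :
    Tendsto (fun b => s b *
        (dmExp m x (α b) (fun k => (k p : ℝ) * (k q : ℝ))
          - dmExp m x (α b) (fun k => (k p : ℝ)) * dmExp m x (α b) (fun k => (k q : ℝ))))
      l (𝓝 0) := by
  set fpq : (Fin (m + 1) → ℕ) → ℝ := fun k => (k p : ℝ) * (k q : ℝ)
  set fp : (Fin (m + 1) → ℕ) → ℝ := fun k => (k p : ℝ)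
  set fq : (Fin (m + 1) → ℕ) → ℝ := fun k => (k q : ℝ)
  set D : (Fin (m + 1) → ℝ) → ℝ := fun α => (ascPochhammer ℝ x).eval (∑ i, α i)
  set Φ : (Fin (m + 1) → ℝ) → ℝ := fun α =>
    dmCofactor m x fpq p α / D α - dmCofactor m x fp p α / D α *
      (α q * (dmCofactor m x fq q α / D α))
  have hD : Continuous D :=
    (Polynomial.continuous _).comp (continuous_finsetSum _ fun i _ => continuous_apply i)
  have hDa : D a ≠ 0 := (ascPochhammer_pos x _ ha).ne'
  have hΦ : ContinuousAt Φ a := by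
    have hquot (g) (r) : ContinuousAt (fun α => dmCofactor m x g r α / D α) a :=
      continuous_dmCofactor.continuousAt.div hD.continuousAt hDa
    exact (hquot fpq p).sub ((hquot fp p).mul ((continuous_apply q).continuousAt.mul (hquot fq q)))
  have hΦa : Φ a = 0 := by
    simp [Φ, haq, dmCofactor_eq_zero hpq (f := fpq) (fun k hk => by simp [fpq, hk]) haq]
  have hfactor : ∀ᶠ b in l, s b * (dmExp m x (α b) fpq - dmExp m x (α b) fp * dmExp m x (α b) fq)
      = s b * α b p * Φ (α b) := by
    filter_upwards [hα_pos] with b hb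
    rw [dmExp_eq_mul_dmCofactor (p := p) hb (fun k hk => by simp [fpq, hk]),
      dmExp_eq_mul_dmCofactor (p := p) hb (fun k hk => by simp [fp, hk]),
      dmExp_eq_mul_dmCofactor (p := q) hb (fun k hk => by simp [fq, hk])]
    ring
  rw [tendsto_congr' hfactor]
  have hΦlim : Tendsto (fun b => Φ (α b)) l (𝓝 0) := hΦa ▸ hΦ.tendsto.comp hα
  simpa using hs.mul hΦlim

end DirichletMultinomial

section Rates

variable {m : ℕ} {r : Fin m → ℝ → ℝ} {t : ℝ}

theorem hasDerivAt_pmain (hr : ∀ j, Continuous (r j)) (hS : ∑ j, r j t ≠ 0) (i : Fin m) :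
    HasDerivAt (fun h => pmain m r t h i) (r i t) 0 := by
  have hI : HasDerivAt (fun h => ∑ j, ∫ s in t..(t + h), r j s) (∑ j, r j t) 0 := by
    refine HasDerivAt.fun_sum fun j _ =>
      HasDerivAt.comp_const_add (f := fun u => ∫ s in t..u, r j s) t 0 ?_
    simpa using intervalIntegral.integral_hasDerivAt_right ((hr j).intervalIntegrable _ _)
      ((hr j).stronglyMeasurableAtFilter _ _) (hr j).continuousAt
  refine (((hI.fun_neg.exp.const_sub 1).mul_const (r i t)).div_const _).congr_deriv ?_
  field_simp
  simp

theorem sum_pmain (hS : ∑ j, r j t ≠ 0) (h : ℝ) :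
    ∑ i, pmain m r t h i = 1 - Real.exp (-(∑ j, ∫ s in t..(t + h), r j s)) := by
  simp only [pmain, ← Finset.sum_div, ← Finset.mul_sum]
  field_simp

theorem pmain_pos (hr : ∀ j, Continuous (r j)) (hr_pos : ∀ j s, 0 < r j s) {h : ℝ} (hh : 0 < h)
    (i : Fin m) : 0 < pmain m r t h i := by
  have hI : 0 < ∑ j, ∫ s in t..(t + h), r j s :=
    Finset.sum_pos (fun j _ => intervalIntegral.intervalIntegral_pos_of_pos_on
      ((hr j).intervalIntegrable _ _) (fun s _ => hr_pos j s) (by linarith))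
      ⟨i, Finset.mem_univ i⟩
  have hS : 0 < ∑ j, r j t := Finset.sum_pos (fun j _ => hr_pos j t) ⟨i, Finset.mem_univ i⟩
  have hexp : Real.exp (-(∑ j, ∫ s in t..(t + h), r j s)) < 1 := Real.exp_lt_one_iff.2 (by linarith)
  exact div_pos (mul_pos (by linarith) (hr_pos i t)) hS

theorem continuousAt_alphaVec (hr : ∀ j, Continuous (r j)) (hS : ∑ j, r j t ≠ 0) (c : ℝ) :
    ContinuousAt (alphaVec m r t c) 0 :=
  have hπ (l : Fin m) := (hasDerivAt_pmain hr hS l).continuousAt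
  (continuousAt_const.mul (continuousAt_const.sub (tendsto_finsetSum _ fun l _ => hπ l))).finCons
    (continuousAt_pi.2 fun l => continuousAt_const.mul (hπ l))

theorem sum_alphaVec (c h : ℝ) : ∑ i, alphaVec m r t c h i = c := by
  rw [alphaVec, Fin.sum_cons, ← Finset.mul_sum]
  ring

theorem alphaVec_pos (hr : ∀ j, Continuous (r j)) (hr_pos : ∀ j s, 0 < r j s) {c : ℝ}
    (hc : 0 < c) {h : ℝ} (hh : 0 < h) : ∀ i, 0 < alphaVec m r t c h i := by
  refine Fin.cases ?_ fun i => mul_pos hc (pmain_pos hr hr_pos hh i)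
  rcases isEmpty_or_nonempty (Fin m) with _ | ⟨⟨i⟩⟩
  · simpa [alphaVec] using hc
  · have hS : ∑ j, r j t ≠ 0 := (Finset.sum_pos (fun j _ => hr_pos j t) ⟨i, Finset.mem_univ i⟩).ne'
    simp only [alphaVec, Fin.cons_zero, sum_pmain hS, sub_sub_cancel]
    positivity

end Rates

theorem dm_infinitesimal_covariance_zero_general
    (m : ℕ) (r : Fin m → ℝ → ℝ)
    (hr_cont : ∀ i, Continuous (r i)) (hr_pos : ∀ i s, 0 < r i s)
    (t c : ℝ) (hc : 0 < c) (x : ℕ) (i j : Fin m) (hij : i ≠ j) :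
    Tendsto (fun h : ℝ => h⁻¹ *
        (dmExp m x (alphaVec m r t c h) (fun k => (k i.succ : ℝ) * (k j.succ : ℝ))
          - dmExp m x (alphaVec m r t c h) (fun k => (k i.succ : ℝ))
            * dmExp m x (alphaVec m r t c h) (fun k => (k j.succ : ℝ))))
      (𝓝[>] (0 : ℝ)) (𝓝 0) := by
  have hS : ∑ l, r l t ≠ 0 := (Finset.sum_pos (fun l _ => hr_pos l t) ⟨i, Finset.mem_univ i⟩).ne'
  refine tendsto_mul_dmCov (L := c * r i t) ((Fin.succ_injective m).ne hij)
    (eventually_nhdsWithin_of_forall fun h hh => alphaVec_pos hr_cont hr_pos hc hh)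
    ((continuousAt_alphaVec hr_cont hS c).tendsto.mono_left nhdsWithin_le_nhds)
    (by rwa [sum_alphaVec]) (by simp [alphaVec, pmain]) ?_
  simpa [alphaVec, pmain, mul_left_comm] using
    (hasDerivAt_pmain hr_cont hS i).tendsto_slope_zero_right.const_mul c

/-- for `(Δ_0^h,…,Δ_m^h) ~ DM(x; cπ_0(h),…,cπ_m(h))` and all `i ≠ j` in
`{1,…,m}`, `lim_{h→0+} h⁻¹ Cov(Δ_i^h, Δ_j^h) = 0`. -/
theorem dm_infinitesimal_covariance_zero
    (m : ℕ) (hm : 2 ≤ m) (r : Fin m → ℝ → ℝ)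
    (hr_cont : ∀ i, Continuous (r i)) (hr_pos : ∀ i s, 0 < r i s)
    (t c : ℝ) (hc : 0 < c) (x : ℕ) (hx : 1 ≤ x) (i j : Fin m) (hij : i ≠ j) :
    Tendsto (fun h : ℝ => h⁻¹ *
        (dmExp m x (alphaVec m r t c h) (fun k => (k i.succ : ℝ) * (k j.succ : ℝ))
          - dmExp m x (alphaVec m r t c h) (fun k => (k i.succ : ℝ))
            * dmExp m x (alphaVec m r t c h) (fun k => (k j.succ : ℝ))))
      (𝓝[>] (0 : ℝ)) (𝓝 0) :=
  dm_infinitesimal_covariance_zero_general m r hr_cont hr_pos t c hc x i j hij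
end
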